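/- arXiv:2002.02447 — 6 statements merged into one kernel-verified Lean document; each statement's English description precedes it below -/
import Mathlib

section
/- Let ‖·‖ be a monotonic norm on ℝ^n, let P be a part (comparability equivalence class) of ℝ^n_+, and let 𝕄 = P ∩ {x ∈ ℝ^n_+ : ‖x‖ = 1}. Then for all x, y ∈ 𝕄, ‖x − y‖_∞ ≤ r · d_H(x,y), where r = inf{t > 0 : x_i ≤ t for all x ∈ 𝕄 and all i}. -/
/-- `M(x/y) = inf {C > 0 : x ≤ C y}` entrywise. -/
noncomputable def MM {n : ℕ} (x y : Fin n → ℝ) : ℝ :=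
  sInf {C : ℝ | 0 < C ∧ ∀ i, x i ≤ C * y i}

/-- Hilbert projective metric `d_H(x,y) = ln(M(x/y) M(y/x))`. -/
noncomputable def dH {n : ℕ} (x y : Fin n → ℝ) : ℝ :=
  Real.log (MM x y * MM y x)

/-- Comparability in the cone order: `∃ c C > 0, c y ≤ x ≤ C y`. -/
def Comp {n : ℕ} (x y : Fin n → ℝ) : Prop :=
  ∃ c C : ℝ, 0 < c ∧ 0 < C ∧ (∀ i, c * y i ≤ x i) ∧ (∀ i, x i ≤ C * y i)

lemma MM_spec {n : ℕ} {x y : Fin n → ℝ}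
    (hS : {C : ℝ | 0 < C ∧ ∀ i, x i ≤ C * y i}.Nonempty)
    (hy : ∀ i, 0 ≤ y i) : ∀ i, x i ≤ MM x y * y i := by
  intro i
  rcases eq_or_lt_of_le (hy i) with h0 | h0
  · obtain ⟨C, hC⟩ := hS
    have := hC.2 i
    rw [← h0] at this ⊢
    simpa using this
  · apply le_of_forall_pos_le_add
    intro ε hε
    obtain ⟨C, hCS, hClt⟩ := Real.lt_sInf_add_pos hS (show 0 < ε / y i from div_pos hε h0)
    have hxi := hCS.2 i
    have hdiv : (ε / y i) * y i = ε := by field_simp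
    calc x i ≤ C * y i := hxi
      _ ≤ (sInf {C : ℝ | 0 < C ∧ ∀ i, x i ≤ C * y i} + ε / y i) * y i := by nlinarith
      _ = MM x y * y i + ε := by rw [add_mul, hdiv]; rfl

lemma key_ineq {a b M r L2 : ℝ} (hM : 1 ≤ M) (hab : a ≤ M * b) (har : a ≤ r)
    (hr : 0 ≤ r) (hL2 : 0 ≤ L2) : a - b ≤ r * (Real.log M + L2) := by
  have hMpos : (0 : ℝ) < M := lt_of_lt_of_le one_pos hM
  have hlog : M - 1 ≤ M * Real.log M := by
    have h := Real.log_le_sub_one_of_pos (show (0:ℝ) < M⁻¹ by positivity)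
    rw [Real.log_inv] at h
    have hinv : M * M⁻¹ = 1 := mul_inv_cancel₀ hMpos.ne'
    nlinarith
  have hlogM : 0 ≤ Real.log M := Real.log_nonneg hM
  have h1 : M * (a - b) ≤ (M - 1) * a := by nlinarith
  have h2 : (M - 1) * a ≤ (M - 1) * r := mul_le_mul_of_nonneg_left har (by linarith)
  have h3 : (M - 1) * r ≤ M * Real.log M * r := mul_le_mul_of_nonneg_right hlog hr
  have h4 : M * Real.log M * r ≤ M * (r * (Real.log M + L2)) := by
    nlinarith [mul_nonneg (mul_nonneg hMpos.le hr) hL2]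
  have h5 : M * (a - b) ≤ M * (r * (Real.log M + L2)) := by linarith
  exact le_of_mul_le_mul_left h5 hMpos

theorem stmt1 {n : ℕ} (N : (Fin n → ℝ) → ℝ)
    (hhom : ∀ (c : ℝ) (x : Fin n → ℝ), N (c • x) = |c| * N x)
    (htri : ∀ x y : Fin n → ℝ, N (x + y) ≤ N x + N y)
    (hdef : ∀ x : Fin n → ℝ, N x = 0 ↔ x = 0)
    (hmono : ∀ x y : Fin n → ℝ, (∀ i, |x i| ≤ |y i|) → N x ≤ N y)
    -- `P` is a part of `ℝ^n_+`: the comparability class of some nonnegative `z`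
    (P : Set (Fin n → ℝ)) (z : Fin n → ℝ) (hz : ∀ i, 0 ≤ z i)
    (hP : P = {x | (∀ i, 0 ≤ x i) ∧ Comp x z})
    (𝕄 : Set (Fin n → ℝ)) (h𝕄 : 𝕄 = P ∩ {x | (∀ i, 0 ≤ x i) ∧ N x = 1})
    (r : ℝ) (hr : r = sInf {t : ℝ | 0 < t ∧ ∀ x ∈ 𝕄, ∀ i, x i ≤ t})
    (x y : Fin n → ℝ) (hx : x ∈ 𝕄) (hy : y ∈ 𝕄) :
    (⨆ i, |x i - y i|) ≤ r * dH x y := by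
  -- basic norm facts
  have hN0 : N 0 = 0 := (hdef 0).mpr rfl
  have hNnonneg : ∀ w : Fin n → ℝ, 0 ≤ N w := by
    intro w
    have h1 : N (w + (-1 : ℝ) • w) ≤ N w + N ((-1 : ℝ) • w) := htri w _
    have h2 : N ((-1 : ℝ) • w) = N w := by rw [hhom]; simp
    have h3 : w + (-1 : ℝ) • w = 0 := by simp
    rw [h3, hN0, h2] at h1
    linarith
  -- unpack memberships
  subst hP h𝕄 hr
  obtain ⟨⟨hx0, cx, Cx, hcx, hCx, hcxz, hxCz⟩, -, hxN⟩ := hx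
  obtain ⟨⟨hy0, cy, Cy, hcy, hCy, hcyz, hyCz⟩, -, hyN⟩ := hy
  -- n ≠ 0
  have hxne : x ≠ 0 := by
    intro h
    rw [h, hN0] at hxN
    norm_num at hxN
  obtain ⟨i0, -⟩ := Function.ne_iff.mp hxne
  have : Nonempty (Fin n) := ⟨i0⟩
  -- the sets defining MM are nonempty
  have hS1 : {C : ℝ | 0 < C ∧ ∀ i, x i ≤ C * y i}.Nonempty := by
    refine ⟨Cx / cy, div_pos hCx hcy, fun i => ?_⟩
    have h1 := hxCz i
    have h2 := hcyz i
    have h3 : Cx * z i = (Cx / cy) * (cy * z i) := by field_simp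
    have h4 : (Cx / cy) * (cy * z i) ≤ (Cx / cy) * y i :=
      mul_le_mul_of_nonneg_left h2 (le_of_lt (div_pos hCx hcy))
    linarith [h3 ▸ h1]
  have hS2 : {C : ℝ | 0 < C ∧ ∀ i, y i ≤ C * x i}.Nonempty := by
    refine ⟨Cy / cx, div_pos hCy hcx, fun i => ?_⟩
    have h1 := hyCz i
    have h2 := hcxz i
    have h3 : Cy * z i = (Cy / cx) * (cx * z i) := by field_simp
    have h4 : (Cy / cx) * (cx * z i) ≤ (Cy / cx) * x i :=
      mul_le_mul_of_nonneg_left h2 (le_of_lt (div_pos hCy hcx))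
    linarith [h3 ▸ h1]
  set M1 := MM x y with hM1def
  set M2 := MM y x with hM2def
  have hM1spec : ∀ i, x i ≤ M1 * y i := MM_spec hS1 hy0
  have hM2spec : ∀ i, y i ≤ M2 * x i := MM_spec hS2 hx0
  have hM1nn : 0 ≤ M1 := Real.sInf_nonneg (fun C hC => hC.1.le)
  have hM2nn : 0 ≤ M2 := Real.sInf_nonneg (fun C hC => hC.1.le)
  -- M1 ≥ 1 and M2 ≥ 1
  have hge1 : ∀ (u v : Fin n → ℝ) (M : ℝ), (∀ i, 0 ≤ u i) → (∀ i, 0 ≤ v i) →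
      N u = 1 → N v = 1 → 0 ≤ M → (∀ i, u i ≤ M * v i) → 1 ≤ M := by
    intro u v M hu hv hNu hNv hMnn hspec
    have h1 : N u ≤ N (M • v) := by
      apply hmono
      intro i
      rw [Pi.smul_apply, smul_eq_mul, abs_of_nonneg (hu i),
        abs_of_nonneg ((hu i).trans (hspec i))]
      exact hspec i
    rw [hhom, abs_of_nonneg hMnn, hNu, hNv, mul_one] at h1
    exact h1
  have hM1ge1 : 1 ≤ M1 := hge1 x y M1 hx0 hy0 hxN hyN hM1nn hM1spec
  have hM2ge1 : 1 ≤ M2 := hge1 y x M2 hy0 hx0 hyN hxN hM2nn hM2spec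
  -- bounding set for r is nonempty
  have hNe : ∀ j : Fin n, 0 < N (Pi.single j 1) := by
    intro j
    refine lt_of_le_of_ne (hNnonneg _) (fun h => ?_)
    have := (hdef _).mp h.symm
    have := congrFun this j
    simp at this
  set t0 : ℝ := 1 + ∑ j : Fin n, (N (Pi.single j 1))⁻¹ with ht0
  have hsum_nn : (0:ℝ) ≤ ∑ j : Fin n, (N (Pi.single j 1))⁻¹ :=
    Finset.sum_nonneg fun j _ => (inv_pos.mpr (hNe j)).le
  have ht0mem : t0 ∈ {t : ℝ | 0 < t ∧ ∀ x ∈ ({x | (∀ i, 0 ≤ x i) ∧ Comp x z} ∩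
      {x | (∀ i, 0 ≤ x i) ∧ N x = 1} : Set (Fin n → ℝ)), ∀ i, x i ≤ t} := by
    constructor
    · positivity
    · rintro w ⟨-, hw0, hwN⟩ i
      have h1 : N (w i • (Pi.single i 1 : Fin n → ℝ)) ≤ N w := by
        apply hmono
        intro j
        rw [Pi.smul_apply, smul_eq_mul, Pi.single_apply]
        by_cases h : j = i
        · subst h; simp
        · simp [h, abs_nonneg]
      rw [hhom, abs_of_nonneg (hw0 i), hwN] at h1
      have h2 : w i ≤ (N (Pi.single i 1))⁻¹ := by
        nlinarith [h1, hNe i, mul_inv_cancel₀ (hNe i).ne']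
      have h3 : (N (Pi.single i 1))⁻¹ ≤ ∑ j : Fin n, (N (Pi.single j 1))⁻¹ :=
        Finset.single_le_sum (f := fun j => (N (Pi.single j 1))⁻¹)
          (fun j _ => (inv_pos.mpr (hNe j)).le) (Finset.mem_univ i)
      rw [ht0]; linarith
  have hrset : {t : ℝ | 0 < t ∧ ∀ x ∈ ({x | (∀ i, 0 ≤ x i) ∧ Comp x z} ∩
      {x | (∀ i, 0 ≤ x i) ∧ N x = 1} : Set (Fin n → ℝ)), ∀ i, x i ≤ t}.Nonempty := ⟨t0, ht0mem⟩
  set r := sInf {t : ℝ | 0 < t ∧ ∀ x ∈ ({x | (∀ i, 0 ≤ x i) ∧ Comp x z} ∩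
      {x | (∀ i, 0 ≤ x i) ∧ N x = 1} : Set (Fin n → ℝ)), ∀ i, x i ≤ t} with hrdef
  have hr0 : 0 ≤ r := Real.sInf_nonneg (fun t ht => ht.1.le)
  have hxr : ∀ i, x i ≤ r := fun i =>
    le_csInf hrset (fun t ht => ht.2 x ⟨⟨hx0, cx, Cx, hcx, hCx, hcxz, hxCz⟩, hx0, hxN⟩ i)
  have hyr : ∀ i, y i ≤ r := fun i =>
    le_csInf hrset (fun t ht => ht.2 y ⟨⟨hy0, cy, Cy, hcy, hCy, hcyz, hyCz⟩, hy0, hyN⟩ i)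
  -- final computation
  have hdH : dH x y = Real.log M1 + Real.log M2 := by
    rw [dH, Real.log_mul (by linarith) (by linarith)]
  rw [hdH]
  apply ciSup_le
  intro i
  rw [abs_sub_le_iff]
  constructor
  · exact key_ineq hM1ge1 (hM1spec i) (hxr i) hr0 (Real.log_nonneg hM2ge1)
  · have := key_ineq hM2ge1 (hM2spec i) (hyr i) hr0 (Real.log_nonneg hM1ge1)
    linarith [this]
end

section
/- Let ‖·‖_γ be a differentiable monotonic norm on ℝ^n with gradient map J_γ(x) = ∇‖x‖_γ for x ≠ 0 and J_γ(0) = 0. Then ‖·‖_γ is strongly monotonic if and only if for every x ∈ ℝ^n_+, x and J_γ(x) are comparable (i.e., there exist c, C > 0 with c·x ≤ J_γ(x) ≤ C·x entrywise). -/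
open Set Filter Topology
open ContinuousLinearMap (proj)

theorem HasDerivAt.eq_zero_of_even {φ : ℝ → ℝ} {d : ℝ} (hφ : HasDerivAt φ d 0)
    (heven : ∀ s, φ (-s) = φ s) : d = 0 := by
  have hneg : HasDerivAt φ (-d) 0 := by
    have := (neg_zero (G := ℝ) ▸ hφ).comp (0 : ℝ) (hasDerivAt_neg (0 : ℝ))
    simpa [Function.comp_def, heven] using this
  linarith [hφ.unique hneg]

section Line

variable {E : Type*} [NormedAddCommGroup E] [NormedSpace ℝ E] {f : E → ℝ} {f' : E →L[ℝ] ℝ}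

theorem HasFDerivAt.hasDerivAt_add_smul {x v : E} {t : ℝ} (hf : HasFDerivAt f f' (x + t • v)) :
    HasDerivAt (fun s : ℝ => f (x + s • v)) (f' v) t := by
  have hline : HasDerivAt (fun s : ℝ => x + s • v) v t := by
    simpa using ((hasDerivAt_id t).smul_const v).const_add x
  exact hf.comp_hasDerivAt t hline

theorem ConvexOn.add_le_of_hasFDerivAt (hf : ConvexOn ℝ univ f) {x : E}
    (hx : HasFDerivAt f f' x) (y : E) : f x + f' (y - x) ≤ f y := by
  have hderiv : HasDerivAt (f ∘ AffineMap.lineMap (k := ℝ) x y) (f' (y - x)) 0 :=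
    ((AffineMap.lineMap_apply_zero (k := ℝ) x y).symm ▸ hx).comp_hasDerivAt 0
      AffineMap.hasDerivAt_lineMap
  have hslope := (hf.comp_affineMap (AffineMap.lineMap (k := ℝ) x y)).le_slope_of_hasDerivAt
    (mem_univ 0) (mem_univ 1) one_pos hderiv
  simp only [slope_def_field, Function.comp_apply, AffineMap.lineMap_apply_zero,
    AffineMap.lineMap_apply_one, sub_zero, div_one] at hslope
  linarith

end Line

section Coordinates

variable {ι : Type*} {N : (ι → ℝ) → ℝ}

theorem apply_eq_of_forall_abs_eq (hmono : ∀ x y : ι → ℝ, (∀ i, |x i| ≤ |y i|) → N x ≤ N y)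
    {x y : ι → ℝ} (h : ∀ i, |x i| = |y i|) : N x = N y :=
  le_antisymm (hmono x y fun i => (h i).le) (hmono y x fun i => (h i).ge)

variable [Fintype ι]

theorem gradient_eq_zero_of_apply_eq_zero [DecidableEq ι]
    (hmono : ∀ x y : ι → ℝ, (∀ i, |x i| ≤ |y i|) → N x ≤ N y) {g x : ι → ℝ}
    (hN : HasFDerivAt N (∑ j, g j • proj (R := ℝ) (φ := fun _ : ι => ℝ) j) x)
    {i : ι} (hi : x i = 0) : g i = 0 := by
  have hline : HasDerivAt (fun s : ℝ => N (x + s • Pi.single i 1)) (g i) 0 := by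
    convert HasFDerivAt.hasDerivAt_add_smul (x := x) (v := Pi.single i (1 : ℝ)) (t := 0)
      (by simpa using hN) using 1
    simp [Pi.single_apply]
  refine hline.eq_zero_of_even fun s => apply_eq_of_forall_abs_eq hmono fun j => ?_
  rcases eq_or_ne j i with rfl | hj
  · simp [hi]
  · simp [hj]

theorem gradient_pos_of_apply_pos [DecidableEq ι] (hconv : ConvexOn ℝ univ N) {g x : ι → ℝ}
    (hN : HasFDerivAt N (∑ j, g j • proj (R := ℝ) (φ := fun _ : ι => ℝ) j) x)
    {i : ι} (hi : 0 < x i) (hlt : N (Function.update x i 0) < N x) : 0 < g i := by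
  have hgrad := hconv.add_le_of_hasFDerivAt hN (Function.update x i 0)
  have hdir : (∑ j, g j • proj (R := ℝ) (φ := fun _ : ι => ℝ) j)
      (Function.update x i 0 - x) = -(g i * x i) := by
    simp [Function.update_apply, ite_sub, mul_ite]
  nlinarith

theorem sign_gradient_eq_sign [DecidableEq ι] (hconv : ConvexOn ℝ univ N)
    (hmono : ∀ x y : ι → ℝ, (∀ i, |x i| ≤ |y i|) → N x ≤ N y)
    (hsmono : ∀ x y : ι → ℝ, (∀ i, |x i| ≤ |y i|) →
      (fun i => |x i|) ≠ (fun i => |y i|) → N x < N y)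
    {J : (ι → ℝ) → ι → ℝ} (hJ0 : J 0 = 0)
    (hJ : ∀ x, x ≠ 0 → HasFDerivAt N (∑ i, J x i • proj (R := ℝ) (φ := fun _ : ι => ℝ) i) x)
    {x : ι → ℝ} (hx : 0 ≤ x) (i : ι) : SignType.sign (J x i) = SignType.sign (x i) := by
  rcases eq_or_ne x 0 with rfl | hx0
  · simp [hJ0]
  rcases (show (0 : ℝ) ≤ x i from hx i).eq_or_lt with hi | hi
  · rw [← hi, sign_zero, sign_eq_zero_iff]
    exact gradient_eq_zero_of_apply_eq_zero hmono (hJ x hx0) hi.symm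
  · rw [sign_pos hi, sign_eq_one_iff]
    refine gradient_pos_of_apply_pos hconv (hJ x hx0) hi (hsmono _ _ (fun j => ?_) fun h => ?_)
    · rcases eq_or_ne j i with rfl | hj <;> simp [*]
    · exact (abs_pos_of_pos hi).ne (by simpa using congrFun h i)

theorem sum_mul_pos_of_sign_eq {g z v : ι → ℝ} (hz : 0 ≤ z)
    (hsign : ∀ i, SignType.sign (g i) = SignType.sign (z i)) (hv : 0 ≤ v) {i₀ : ι}
    (hzi₀ : 0 < z i₀) (hvi₀ : 0 < v i₀) : 0 < ∑ i, g i * v i := by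
  refine Finset.sum_pos' (fun i _ => mul_nonneg ?_ (hv i)) ⟨i₀, Finset.mem_univ _, ?_⟩
  · rw [← sign_nonneg_iff, hsign, sign_nonneg_iff]
    exact hz i
  · exact mul_pos (sign_eq_one_iff.1 ((hsign i₀).trans (sign_pos hzi₀))) hvi₀

theorem lt_of_le_of_ne_of_sign_gradient_eq (hN : Continuous N) {J : (ι → ℝ) → ι → ℝ}
    (hJ : ∀ x, x ≠ 0 → HasFDerivAt N (∑ i, J x i • proj (R := ℝ) (φ := fun _ : ι => ℝ) i) x)
    (hsign : ∀ z, 0 ≤ z → ∀ i, SignType.sign (J z i) = SignType.sign (z i))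
    {x y : ι → ℝ} (hx : 0 ≤ x) (hxy : x ≤ y) (hne : x ≠ y) : N x < N y := by
  set v := y - x
  have hv : 0 ≤ v := sub_nonneg.2 hxy
  obtain ⟨i₀, hi₀⟩ : ∃ i, 0 < v i := by
    by_contra! h
    exact hne (sub_eq_zero.1 (le_antisymm h hv)).symm
  have hz : ∀ t ∈ Ioo (0 : ℝ) 1, 0 ≤ x + t • v ∧ 0 < (x + t • v) i₀ := fun t ht =>
    ⟨add_nonneg hx (smul_nonneg ht.1.le hv), add_pos_of_nonneg_of_pos (hx i₀) (mul_pos ht.1 hi₀)⟩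
  obtain ⟨t, ht, hslope⟩ := exists_hasDerivAt_eq_slope (fun s : ℝ => N (x + s • v))
    (fun s => ∑ i, J (x + s • v) i * v i) zero_lt_one (by fun_prop) fun t ht => by
      convert (hJ _ (ne_of_apply_ne (· i₀) (hz t ht).2.ne')).hasDerivAt_add_smul using 1
      simp
  have hpos := sum_mul_pos_of_sign_eq (hz t ht).1 (hsign _ (hz t ht).1) hv (hz t ht).2 hi₀
  simp only [hslope, v, one_smul, zero_smul, add_zero, add_sub_cancel, sub_zero, div_one] at hpos
  linarith

end Coordinates

theorem comp_iff_forall_sign_eq {n : ℕ} {x y : Fin n → ℝ} (hx : 0 ≤ x) :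
    Comp y x ↔ ∀ i, SignType.sign (y i) = SignType.sign (x i) := by
  constructor
  · rintro ⟨c, C, hc, hC, hlow, hup⟩ i
    rcases (show (0 : ℝ) ≤ x i from hx i).eq_or_lt with hi | hi
    · rw [← hi, sign_zero, sign_eq_zero_iff]
      exact le_antisymm (by simpa [← hi] using hup i) (by simpa [← hi] using hlow i)
    · rw [sign_pos hi, sign_eq_one_iff]
      exact (mul_pos hc hi).trans_le (hlow i)
  · intro h
    have hzero : ∀ i, x i = 0 → y i = 0 := fun i hi =>
      sign_eq_zero_iff.1 ((h i).trans (by simp [hi]))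
    have hpos : ∀ i, 0 < x i → 0 < y i := fun i hi => sign_eq_one_iff.1 ((h i).trans (sign_pos hi))
    have hlow : ∀ i, ∀ᶠ c in 𝓝[>] (0 : ℝ), c * x i ≤ y i := by
      intro i
      rcases (show (0 : ℝ) ≤ x i from hx i).eq_or_lt with hi | hi
      · exact Eventually.of_forall fun c => by simp [← hi, hzero i hi.symm]
      · have : Tendsto (· * x i) (𝓝 (0 : ℝ)) (𝓝 0) := by
          simpa using (continuous_mul_const (x i)).tendsto 0
        exact nhdsWithin_le_nhds (this.eventually (eventually_le_nhds (hpos i hi)))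
    have hup : ∀ i, ∀ᶠ C in atTop, y i ≤ C * x i := by
      intro i
      rcases (show (0 : ℝ) ≤ x i from hx i).eq_or_lt with hi | hi
      · exact Eventually.of_forall fun C => by simp [← hi, hzero i hi.symm]
      · exact (tendsto_id.atTop_mul_const hi).eventually_ge_atTop (y i)
    obtain ⟨c, hc, hc0⟩ := ((eventually_all.2 hlow).and self_mem_nhdsWithin).exists
    obtain ⟨C, hC, hC0⟩ := ((eventually_all.2 hup).and (eventually_gt_atTop 0)).exists
    exact ⟨c, C, hc0, hC0, hc, hC⟩

theorem stmt4_general {n : ℕ} (N : (Fin n → ℝ) → ℝ)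
    (hhom : ∀ (c : ℝ) (x : Fin n → ℝ), N (c • x) = |c| * N x)
    (htri : ∀ x y : Fin n → ℝ, N (x + y) ≤ N x + N y)
    (hmono : ∀ x y : Fin n → ℝ, (∀ i, |x i| ≤ |y i|) → N x ≤ N y)
    -- `J x` is the gradient of `N` at every `x ≠ 0`, and `J 0 = 0`
    (J : (Fin n → ℝ) → (Fin n → ℝ)) (hJ0 : J 0 = 0)
    (hJ : ∀ x : Fin n → ℝ, x ≠ 0 → HasFDerivAt N
      (∑ i : Fin n, J x i • ContinuousLinearMap.proj (R := ℝ) (φ := fun _ : Fin n => ℝ) i) x) :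
    (∀ x y : Fin n → ℝ, (∀ i, |x i| ≤ |y i|) →
        (fun i => |x i|) ≠ (fun i => |y i|) → N x < N y)
      ↔ (∀ x : Fin n → ℝ, (∀ i, 0 ≤ x i) → Comp (J x) x) := by
  have hconv : ConvexOn ℝ univ N := (Seminorm.of N htri hhom).convexOn
  constructor
  · intro hsmono x hx
    exact (comp_iff_forall_sign_eq hx).2 (sign_gradient_eq_sign hconv hmono hsmono hJ0 hJ hx)
  · intro hcomp x y hxy hne
    have habs (z : Fin n → ℝ) : N (fun i => |z i|) = N z :=
      apply_eq_of_forall_abs_eq hmono fun i => abs_abs (z i)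
    rw [← habs x, ← habs y]
    exact lt_of_le_of_ne_of_sign_gradient_eq
      (continuousOn_univ.1 (hconv.continuousOn isOpen_univ)) hJ
      (fun z hz => (comp_iff_forall_sign_eq hz).1 (hcomp z hz)) (fun i => abs_nonneg (x i))
      hxy hne

theorem stmt4 {n : ℕ} (N : (Fin n → ℝ) → ℝ)
    (hhom : ∀ (c : ℝ) (x : Fin n → ℝ), N (c • x) = |c| * N x)
    (htri : ∀ x y : Fin n → ℝ, N (x + y) ≤ N x + N y)
    (hdef : ∀ x : Fin n → ℝ, N x = 0 ↔ x = 0)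
    (hmono : ∀ x y : Fin n → ℝ, (∀ i, |x i| ≤ |y i|) → N x ≤ N y)
    -- `J x` is the gradient of `N` at every `x ≠ 0`, and `J 0 = 0`
    (J : (Fin n → ℝ) → (Fin n → ℝ)) (hJ0 : J 0 = 0)
    (hJ : ∀ x : Fin n → ℝ, x ≠ 0 → HasFDerivAt N
      (∑ i : Fin n, J x i • ContinuousLinearMap.proj (R := ℝ) (φ := fun _ : Fin n => ℝ) i) x) :
    (∀ x y : Fin n → ℝ, (∀ i, |x i| ≤ |y i|) →
        (fun i => |x i|) ≠ (fun i => |y i|) → N x < N y)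
      ↔ (∀ x : Fin n → ℝ, (∀ i, 0 ≤ x i) → Comp (J x) x) :=
  stmt4_general N hhom htri hmono J hJ0 hJ
end

section
/- Let d ≥ 1, P_i ∈ ℝ^{n_i×n}, ‖·‖_{α_i} norms on ℝ^{n_i}, ‖·‖_γ a monotonic norm on ℝ^d, and assume the stacked matrix M = [P_1^T,…,P_d^T]^T has rank n. Define ‖x‖_α = ‖(‖P_1 x‖_{α_1}, …, ‖P_d x‖_{α_d})‖_γ. Then ‖·‖_α is a norm on ℝ^n and its dual norm is ‖x‖_{α*} = inf{ ‖(‖u_1‖_{α_1*},…,‖u_d‖_{α_d*})‖_{γ*} : u_i ∈ ℝ^{n_i}, P_1^T u_1 + ⋯ + P_d^T u_d = x }. -/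
/-!
The function `‖x‖_α` is the pullback, under the injective linear map `M x = (P_i x)_i`, of the
norm `p v = γ (α_i (v_i))_i` on `∏ ℝ^{n_i}` (a norm because `γ` is monotone).

Weak duality: if `∑ P_iᵀ u_i = x`, then `⟨z, x⟩ = ∑ ⟨P_i z, u_i⟩`, and Hölder's inequality for each
`α_i` and then for `γ` bounds this by `γ*(α_i*(u_i))_i · ‖z‖_α`.

Attainment: with `C = ‖x‖_{α*}`, the functional `M z ↦ ⟨z, x⟩` on the range of `M` is dominated
by `C · p`; Hahn–Banach extends it to all of `∏ ℝ^{n_i}`, the extension is `v ↦ ∑ ⟨v_i, u_i⟩`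
for some `u` with `∑ P_iᵀ u_i = x`, and testing it on `v_i = |t_i| w_i` with `α_i(w_i) ≤ 1`,
`⟨w_i, u_i⟩ = α_i*(u_i)` shows, by monotonicity of `γ`, that `γ*(α_i*(u_i))_i ≤ C`.
-/

open Matrix

/-- The standard norm axioms for a function on `Fin m → ℝ`. -/
def IsNorm {m : ℕ} (N : (Fin m → ℝ) → ℝ) : Prop :=
  (∀ (c : ℝ) (x : Fin m → ℝ), N (c • x) = |c| * N x) ∧
  (∀ x y : Fin m → ℝ, N (x + y) ≤ N x + N y) ∧
  (∀ x : Fin m → ℝ, N x = 0 ↔ x = 0)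

/-- Dual norm with respect to the standard inner product. -/
noncomputable def dualN {m : ℕ} (N : (Fin m → ℝ) → ℝ) (y : Fin m → ℝ) : ℝ :=
  sSup {r : ℝ | ∃ x : Fin m → ℝ, x ≠ 0 ∧ r = (∑ i, x i * y i) / N x}

namespace IsNorm

variable {m : ℕ} {N : (Fin m → ℝ) → ℝ}

def toSeminorm (hN : IsNorm N) : Seminorm ℝ (Fin m → ℝ) :=
  Seminorm.of N hN.2.1 fun c x => by rw [hN.1, Real.norm_eq_abs]

lemma nonneg (hN : IsNorm N) (x : Fin m → ℝ) : 0 ≤ N x :=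
  apply_nonneg hN.toSeminorm x

lemma map_zero (hN : IsNorm N) : N 0 = 0 :=
  _root_.map_zero hN.toSeminorm

lemma map_neg (hN : IsNorm N) (x : Fin m → ℝ) : N (-x) = N x :=
  map_neg_eq_map hN.toSeminorm x

lemma pos (hN : IsNorm N) {x : Fin m → ℝ} (hx : x ≠ 0) : 0 < N x :=
  (hN.nonneg x).lt_of_ne fun h => hx ((hN.2.2 x).1 h.symm)

lemma continuous (hN : IsNorm N) : Continuous N :=
  continuousOn_univ.1 (hN.toSeminorm.convexOn.continuousOn isOpen_univ)

lemma exists_pos_mul_norm_le (hN : IsNorm N) : ∃ c > 0, ∀ x, c * ‖x‖ ≤ N x := by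
  rcases isEmpty_or_nonempty (Fin m) with hm | hm
  · exact ⟨1, one_pos, fun x => by simp [Subsingleton.elim x 0, hN.map_zero]⟩
  obtain ⟨v, hv, hmin⟩ := (isCompact_sphere (0 : Fin m → ℝ) 1).exists_isMinOn
    (NormedSpace.sphere_nonempty.2 zero_le_one) hN.continuous.continuousOn
  refine ⟨N v, hN.pos (ne_zero_of_mem_unit_sphere ⟨v, hv⟩), fun x => ?_⟩
  rcases eq_or_ne x 0 with rfl | hx
  · simp [hN.map_zero]
  have hx' : (0 : ℝ) < ‖x‖ := norm_pos_iff.2 hx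
  have hmem : ‖x‖⁻¹ • x ∈ Metric.sphere (0 : Fin m → ℝ) 1 := by
    simp [norm_smul, hx'.ne']
  have := hmin hmem
  simp only [Set.mem_ofPred_eq, hN.1, abs_inv, abs_norm] at this
  calc N v * ‖x‖ ≤ ‖x‖⁻¹ * N x * ‖x‖ := by gcongr
    _ = N x := by field_simp

lemma isCompact_setOf_le_one (hN : IsNorm N) : IsCompact {v | N v ≤ 1} := by
  obtain ⟨c, hc, hle⟩ := hN.exists_pos_mul_norm_le
  refine Metric.isCompact_of_isClosed_isBounded (isClosed_le hN.continuous continuous_const)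
    ((Metric.isBounded_closedBall (x := 0) (r := 1 / c)).subset fun v hv => ?_)
  rw [mem_closedBall_zero_iff, le_div_iff₀' hc]
  exact (hle v).trans hv

lemma exists_forall_dotProduct_le (hN : IsNorm N) (y : Fin m → ℝ) :
    ∃ v, N v ≤ 1 ∧ ∀ w, N w ≤ 1 → w ⬝ᵥ y ≤ v ⬝ᵥ y :=
  hN.isCompact_setOf_le_one.exists_isMaxOn ⟨0, by simp [hN.map_zero]⟩
    (continuous_id.dotProduct continuous_const).continuousOn

lemma dotProduct_le_mul_of_forall_le (hN : IsNorm N) {y : Fin m → ℝ} {C : ℝ}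
    (hC : ∀ w, N w ≤ 1 → w ⬝ᵥ y ≤ C) (x : Fin m → ℝ) : x ⬝ᵥ y ≤ C * N x := by
  rcases eq_or_ne x 0 with rfl | hx
  · simp [hN.map_zero]
  have hNx := hN.pos hx
  have h := hC ((N x)⁻¹ • x) (by rw [hN.1, abs_inv, abs_of_pos hNx, inv_mul_cancel₀ hNx.ne'])
  rwa [smul_dotProduct, smul_eq_mul, inv_mul_le_iff₀ hNx, mul_comm] at h

lemma div_le_dualN (hN : IsNorm N) {x : Fin m → ℝ} (hx : x ≠ 0) (y : Fin m → ℝ) :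
    x ⬝ᵥ y / N x ≤ dualN N y := by
  obtain ⟨v, -, hv⟩ := hN.exists_forall_dotProduct_le y
  refine le_csSup ⟨v ⬝ᵥ y, ?_⟩ ⟨x, hx, rfl⟩
  rintro _ ⟨z, hz, rfl⟩
  exact (div_le_iff₀ (hN.pos hz)).2 (hN.dotProduct_le_mul_of_forall_le hv z)

lemma dotProduct_le_dualN_mul (hN : IsNorm N) (x y : Fin m → ℝ) :
    x ⬝ᵥ y ≤ dualN N y * N x := by
  rcases eq_or_ne x 0 with rfl | hx
  · simp [hN.map_zero]
  exact (div_le_iff₀ (hN.pos hx)).1 (hN.div_le_dualN hx y)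

lemma dualN_nonneg (hN : IsNorm N) (y : Fin m → ℝ) : 0 ≤ dualN N y := by
  rcases subsingleton_or_nontrivial (Fin m → ℝ) with hm | hm
  · have h (x : Fin m → ℝ) : x = 0 := Subsingleton.elim x 0
    simp [dualN, h]
  obtain ⟨x, hx⟩ := exists_ne (0 : Fin m → ℝ)
  have h₁ := hN.div_le_dualN hx y
  have h₂ := hN.div_le_dualN (neg_ne_zero.2 hx) y
  rw [neg_dotProduct, hN.map_neg, neg_div] at h₂
  linarith

lemma dualN_le (hN : IsNorm N) {y : Fin m → ℝ} {C : ℝ} (hC : 0 ≤ C)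
    (h : ∀ x, x ⬝ᵥ y ≤ C * N x) : dualN N y ≤ C :=
  Real.sSup_le (by rintro _ ⟨x, hx, rfl⟩; exact (div_le_iff₀ (hN.pos hx)).2 (h x)) hC

lemma exists_dotProduct_eq_dualN (hN : IsNorm N) (y : Fin m → ℝ) :
    ∃ v, N v ≤ 1 ∧ v ⬝ᵥ y = dualN N y := by
  obtain ⟨v, hv, hmax⟩ := hN.exists_forall_dotProduct_le y
  have hv₀ : 0 ≤ v ⬝ᵥ y := by simpa using hmax 0 (by simp [hN.map_zero])
  refine ⟨v, hv, le_antisymm ?_ (hN.dualN_le hv₀ (hN.dotProduct_le_mul_of_forall_le hmax))⟩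
  calc v ⬝ᵥ y ≤ dualN N y * N v := hN.dotProduct_le_dualN_mul v y
    _ ≤ dualN N y := mul_le_of_le_one_right (hN.dualN_nonneg y) hv

end IsNorm

section DotProduct

variable {ι : Type*} [Fintype ι] {κ : ι → Type*} [∀ i, Fintype (κ i)]

lemma exists_eq_sum_dotProduct (g : (∀ i, κ i → ℝ) →ₗ[ℝ] ℝ) :
    ∃ u : ∀ i, κ i → ℝ, ∀ v, g v = ∑ i, v i ⬝ᵥ u i := by
  classical
  refine ⟨fun i => (dotProductEquiv ℝ (κ i)).symm (g ∘ₗ LinearMap.single ℝ (fun i => κ i → ℝ) i),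
    fun v => ?_⟩
  conv_lhs => rw [← Finset.univ_sum_single v, map_sum]
  refine Finset.sum_congr rfl fun i _ => ?_
  rw [dotProduct_comm, ← dotProductEquiv_apply_apply, LinearEquiv.apply_symm_apply]
  rfl

lemma dotProduct_sum_transpose_mulVec {n R : Type*} [Fintype n] [CommSemiring R]
    (P : ∀ i, Matrix (κ i) n R) (z : n → R) (u : ∀ i, κ i → R) :
    z ⬝ᵥ ∑ i, (P i)ᵀ *ᵥ u i = ∑ i, (P i *ᵥ z) ⬝ᵥ u i := by
  simp only [dotProduct_sum, dotProduct_mulVec, vecMul_transpose]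

end DotProduct

lemma exists_linearMap_comp_eq_of_le_sublinear {E F : Type*} [AddCommGroup E] [Module ℝ E]
    [AddCommGroup F] [Module ℝ F] {M : E →ₗ[ℝ] F} (hM : Function.Injective M) (φ : E →ₗ[ℝ] ℝ)
    {p : F → ℝ} (p_hom : ∀ c : ℝ, 0 < c → ∀ x, p (c • x) = c * p x)
    (p_add : ∀ x y, p (x + y) ≤ p x + p y) (hφ : ∀ z, φ z ≤ p (M z)) :
    ∃ g : F →ₗ[ℝ] ℝ, g ∘ₗ M = φ ∧ ∀ v, g v ≤ p v := by
  obtain ⟨g, hgφ, hgp⟩ := exists_extension_of_le_sublinear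
    ⟨LinearMap.range M, φ ∘ₗ (LinearEquiv.ofInjective M hM).symm.toLinearMap⟩ p p_hom p_add
    fun w => by simpa using hφ ((LinearEquiv.ofInjective M hM).symm w)
  refine ⟨g, LinearMap.ext fun z => ?_, hgp⟩
  simpa using hgφ (LinearEquiv.ofInjective M hM z)

def prodNorm {d : ℕ} {nn : Fin d → ℕ} (γ : (Fin d → ℝ) → ℝ) (α : ∀ i, (Fin (nn i) → ℝ) → ℝ)
    (v : ∀ i, Fin (nn i) → ℝ) : ℝ :=
  γ fun i => α i (v i)

/-- The norm `‖·‖_α` of the statement. -/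
def stackedNorm {d n : ℕ} {nn : Fin d → ℕ} (γ : (Fin d → ℝ) → ℝ)
    (α : ∀ i, (Fin (nn i) → ℝ) → ℝ) (P : ∀ i, Matrix (Fin (nn i)) (Fin n) ℝ) (x : Fin n → ℝ) : ℝ :=
  prodNorm γ α fun i => P i *ᵥ x

section ProdNorm

variable {d : ℕ} {nn : Fin d → ℕ} {γ : (Fin d → ℝ) → ℝ} {α : ∀ i, (Fin (nn i) → ℝ) → ℝ}

lemma prodNorm_smul (hα : ∀ i, IsNorm (α i)) (hγ : IsNorm γ) (c : ℝ) (v : ∀ i, Fin (nn i) → ℝ) :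
    prodNorm γ α (c • v) = |c| * prodNorm γ α v := by
  have h : (fun i => α i ((c • v) i)) = |c| • fun i => α i (v i) := by
    funext i
    exact (hα i).1 c (v i)
  rw [prodNorm, h, hγ.1, abs_abs, prodNorm]

lemma prodNorm_add_le (hα : ∀ i, IsNorm (α i)) (hγ : IsNorm γ)
    (hγmono : ∀ x y : Fin d → ℝ, (∀ i, |x i| ≤ |y i|) → γ x ≤ γ y)
    (v w : ∀ i, Fin (nn i) → ℝ) : prodNorm γ α (v + w) ≤ prodNorm γ α v + prodNorm γ α w := by
  refine le_trans (hγmono _ _ fun i => ?_) (hγ.2.1 _ _)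
  rw [Pi.add_apply, Pi.add_apply, abs_of_nonneg ((hα i).nonneg _),
    abs_of_nonneg (add_nonneg ((hα i).nonneg _) ((hα i).nonneg _))]
  exact (hα i).2.1 (v i) (w i)

lemma prodNorm_eq_zero_iff (hα : ∀ i, IsNorm (α i)) (hγ : IsNorm γ)
    (v : ∀ i, Fin (nn i) → ℝ) : prodNorm γ α v = 0 ↔ v = 0 := by
  rw [prodNorm, hγ.2.2, funext_iff, funext_iff]
  exact forall_congr' fun i => (hα i).2.2 (v i)

lemma sum_dotProduct_le_dualN_mul_prodNorm (hα : ∀ i, IsNorm (α i)) (hγ : IsNorm γ)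
    (v u : ∀ i, Fin (nn i) → ℝ) :
    ∑ i, v i ⬝ᵥ u i ≤ dualN γ (fun i => dualN (α i) (u i)) * prodNorm γ α v :=
  calc ∑ i, v i ⬝ᵥ u i ≤ ∑ i, α i (v i) * dualN (α i) (u i) :=
        Finset.sum_le_sum fun i _ => by
          rw [mul_comm]
          exact (hα i).dotProduct_le_dualN_mul (v i) (u i)
    _ ≤ _ := hγ.dotProduct_le_dualN_mul _ _

lemma dualN_le_of_forall_sum_dotProduct_le (hα : ∀ i, IsNorm (α i)) (hγ : IsNorm γ)
    (hγmono : ∀ x y : Fin d → ℝ, (∀ i, |x i| ≤ |y i|) → γ x ≤ γ y)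
    {u : ∀ i, Fin (nn i) → ℝ} {C : ℝ} (hC : 0 ≤ C)
    (h : ∀ v, ∑ i, v i ⬝ᵥ u i ≤ C * prodNorm γ α v) :
    dualN γ (fun i => dualN (α i) (u i)) ≤ C := by
  refine hγ.dualN_le hC fun t => ?_
  choose w hw hwu using fun i => (hα i).exists_dotProduct_eq_dualN (u i)
  have hwt : prodNorm γ α (fun i => |t i| • w i) ≤ γ t := by
    refine hγmono _ _ fun i => ?_
    rw [(hα i).1, abs_abs, abs_of_nonneg (mul_nonneg (abs_nonneg _) ((hα i).nonneg _))]
    exact mul_le_of_le_one_right (abs_nonneg _) (hw i)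
  calc t ⬝ᵥ (fun i => dualN (α i) (u i)) ≤ ∑ i, |t i| * dualN (α i) (u i) :=
        Finset.sum_le_sum fun i _ =>
          mul_le_mul_of_nonneg_right (le_abs_self _) ((hα i).dualN_nonneg _)
    _ = ∑ i, (|t i| • w i) ⬝ᵥ u i := by simp only [smul_dotProduct, hwu, smul_eq_mul]
    _ ≤ C * prodNorm γ α (fun i => |t i| • w i) := h _
    _ ≤ C * γ t := by gcongr

end ProdNorm

section StackedNorm

variable {d n : ℕ} {nn : Fin d → ℕ} {γ : (Fin d → ℝ) → ℝ} {α : ∀ i, (Fin (nn i) → ℝ) → ℝ}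
  {P : ∀ i, Matrix (Fin (nn i)) (Fin n) ℝ}

lemma isNorm_stackedNorm (hα : ∀ i, IsNorm (α i)) (hγ : IsNorm γ)
    (hγmono : ∀ x y : Fin d → ℝ, (∀ i, |x i| ≤ |y i|) → γ x ≤ γ y)
    (hrank : ∀ x : Fin n → ℝ, (∀ i, P i *ᵥ x = 0) → x = 0) :
    IsNorm (stackedNorm γ α P) := by
  refine ⟨fun c x => ?_, fun x y => ?_, fun x => ?_⟩
  · simp only [stackedNorm, mulVec_smul]
    exact prodNorm_smul hα hγ c _
  · simp only [stackedNorm, mulVec_add]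
    exact prodNorm_add_le hα hγ hγmono _ _
  · rw [stackedNorm, prodNorm_eq_zero_iff hα hγ]
    exact ⟨fun h => hrank x (congrFun h), fun h => funext fun i => by simp [h]⟩

lemma dualN_stackedNorm_le (hnorm : IsNorm (stackedNorm γ α P)) (hα : ∀ i, IsNorm (α i))
    (hγ : IsNorm γ) {x : Fin n → ℝ} {u : ∀ i, Fin (nn i) → ℝ}
    (hu : ∑ i, (P i)ᵀ *ᵥ u i = x) :
    dualN (stackedNorm γ α P) x ≤ dualN γ (fun i => dualN (α i) (u i)) :=
  hnorm.dualN_le (hγ.dualN_nonneg _) fun z => by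
    rw [← hu, dotProduct_sum_transpose_mulVec]
    exact sum_dotProduct_le_dualN_mul_prodNorm hα hγ _ u

lemma exists_sum_transpose_mulVec_eq_and_le_dualN_stackedNorm (hα : ∀ i, IsNorm (α i))
    (hγ : IsNorm γ) (hγmono : ∀ x y : Fin d → ℝ, (∀ i, |x i| ≤ |y i|) → γ x ≤ γ y)
    (hrank : ∀ x : Fin n → ℝ, (∀ i, P i *ᵥ x = 0) → x = 0) (x : Fin n → ℝ) :
    ∃ u : ∀ i, Fin (nn i) → ℝ, ∑ i, (P i)ᵀ *ᵥ u i = x ∧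
      dualN γ (fun i => dualN (α i) (u i)) ≤ dualN (stackedNorm γ α P) x := by
  have hnorm := isNorm_stackedNorm hα hγ hγmono hrank
  set C := dualN (stackedNorm γ α P) x
  have hC : 0 ≤ C := hnorm.dualN_nonneg x
  obtain ⟨g, hgM, hg⟩ := exists_linearMap_comp_eq_of_le_sublinear
    (M := LinearMap.pi fun i => (P i).mulVecLin)
    ((injective_iff_map_eq_zero _).2 fun z hz => hrank z fun i => congrFun hz i)
    (dotProductEquiv ℝ (Fin n) x) (p := fun v => C * prodNorm γ α v)
    (fun c hc v => by rw [prodNorm_smul hα hγ, abs_of_pos hc]; ring)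
    (fun v w => by
      rw [← mul_add]
      exact mul_le_mul_of_nonneg_left (prodNorm_add_le hα hγ hγmono v w) hC)
    (fun z => by
      rw [dotProductEquiv_apply_apply, dotProduct_comm]
      exact hnorm.dotProduct_le_dualN_mul z x)
  obtain ⟨u, hu⟩ := exists_eq_sum_dotProduct g
  refine ⟨u, dotProduct_eq _ _ fun z => ?_,
    dualN_le_of_forall_sum_dotProduct_le hα hγ hγmono hC fun v => hu v ▸ hg v⟩
  rw [dotProduct_comm, dotProduct_sum_transpose_mulVec, ← hu]
  exact LinearMap.congr_fun hgM z

end StackedNorm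

theorem stmt9_general {d : ℕ} {n : ℕ} (nn : Fin d → ℕ)
    (P : ∀ i, Matrix (Fin (nn i)) (Fin n) ℝ)
    (α : ∀ i, (Fin (nn i) → ℝ) → ℝ) (hα : ∀ i, IsNorm (α i))
    (γ : (Fin d → ℝ) → ℝ) (hγ : IsNorm γ)
    (hγmono : ∀ x y : Fin d → ℝ, (∀ i, |x i| ≤ |y i|) → γ x ≤ γ y)
    -- the stacked matrix `M = [P_1^T, …, P_d^T]^T` has rank `n`,
    -- i.e. the map `x ↦ (P_i x)_i` is injective
    (hrank : ∀ x : Fin n → ℝ, (∀ i, (P i).mulVec x = 0) → x = 0)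
    (Nα : (Fin n → ℝ) → ℝ)
    (hNα : Nα = fun x => γ (fun i => α i ((P i).mulVec x))) :
    IsNorm Nα ∧
    (∀ x : Fin n → ℝ,
      dualN Nα x
        = sInf {r : ℝ | ∃ u : ∀ i, Fin (nn i) → ℝ,
            (∑ i, (P i)ᵀ.mulVec (u i)) = x ∧
            r = dualN γ (fun i => dualN (α i) (u i))}) := by
  subst hNα
  have hnorm : IsNorm (stackedNorm γ α P) := isNorm_stackedNorm hα hγ hγmono hrank
  refine ⟨hnorm, fun x => ?_⟩
  obtain ⟨u, hux, hu⟩ :=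
    exists_sum_transpose_mulVec_eq_and_le_dualN_stackedNorm hα hγ hγmono hrank x
  refine (IsLeast.csInf_eq ?_).symm
  refine ⟨⟨u, hux, le_antisymm (dualN_stackedNorm_le hnorm hα hγ hux) hu⟩, ?_⟩
  rintro r ⟨v, hv, rfl⟩
  exact dualN_stackedNorm_le hnorm hα hγ hv

theorem stmt9 {d : ℕ} (hd : 1 ≤ d) {n : ℕ} (nn : Fin d → ℕ)
    (P : ∀ i, Matrix (Fin (nn i)) (Fin n) ℝ)
    (α : ∀ i, (Fin (nn i) → ℝ) → ℝ) (hα : ∀ i, IsNorm (α i))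
    (γ : (Fin d → ℝ) → ℝ) (hγ : IsNorm γ)
    (hγmono : ∀ x y : Fin d → ℝ, (∀ i, |x i| ≤ |y i|) → γ x ≤ γ y)
    -- the stacked matrix `M = [P_1^T, …, P_d^T]^T` has rank `n`,
    -- i.e. the map `x ↦ (P_i x)_i` is injective
    (hrank : ∀ x : Fin n → ℝ, (∀ i, (P i).mulVec x = 0) → x = 0)
    (Nα : (Fin n → ℝ) → ℝ)
    (hNα : Nα = fun x => γ (fun i => α i ((P i).mulVec x))) :
    IsNorm Nα ∧
    (∀ x : Fin n → ℝ,
      dualN Nα x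
        = sInf {r : ℝ | ∃ u : ∀ i, Fin (nn i) → ℝ,
            (∑ i, (P i)ᵀ.mulVec (u i)) = x ∧
            r = dualN γ (fun i => dualN (α i) (u i))}) :=
  stmt9_general nn P α hα γ hγ hγmono hrank Nα hNα
end

section
/- Let A ∈ ℝ^{m×n} have strictly positive entries. Then the projective diameter Δ(A) = sup{d_H(Ax, Ay) : x, y ∈ ℝ^n_+, x ~ y} is finite and equals ln( max_{i,j,k,l} (a_{ki} a_{lj}) / (a_{kj} a_{li}) ). Moreover Δ(A) = Δ(A^T). -/
open Matrix

/-- The set of values `d_H(Ax, Ay)` over comparable nonnegative `x, y`,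
whose supremum is the projective diameter `Δ(A)`. -/
def diamSet {m n : ℕ} (A : Matrix (Fin m) (Fin n) ℝ) : Set ℝ :=
  {r : ℝ | ∃ x y : Fin n → ℝ, (∀ i, 0 ≤ x i) ∧ (∀ i, 0 ≤ y i) ∧ Comp x y ∧
    r = dH (A.mulVec x) (A.mulVec y)}

lemma exists_ciSup_eq {ι : Type*} [Finite ι] [Nonempty ι] (f : ι → ℝ) :
    ∃ i, (⨆ j, f j) = f i ∧ ∀ j, f j ≤ f i := by
  obtain ⟨i, hi⟩ := Finite.exists_max f
  exact ⟨i, le_antisymm (ciSup_le hi) (le_ciSup (Finite.bddAbove_range f) i), hi⟩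

lemma MM_eq {n : ℕ} [Nonempty (Fin n)] {u v : Fin n → ℝ}
    (hu : ∀ k, 0 < u k) (hv : ∀ k, 0 < v k) :
    MM u v = ⨆ k, u k / v k := by
  have hb : ∀ k, u k / v k ≤ ⨆ j, u j / v j :=
    fun k => le_ciSup (Finite.bddAbove_range (fun j => u j / v j)) k
  have hpos : 0 < ⨆ k, u k / v k := by
    obtain ⟨k⟩ := (inferInstance : Nonempty (Fin n))
    exact lt_of_lt_of_le (div_pos (hu k) (hv k)) (hb k)
  have hset : {C : ℝ | 0 < C ∧ ∀ i, u i ≤ C * v i} = Set.Ici (⨆ k, u k / v k) := by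
    ext C
    constructor
    · rintro ⟨hC, h⟩
      exact ciSup_le fun k => (div_le_iff₀ (hv k)).2 (h k)
    · intro h
      refine ⟨hpos.trans_le h, fun i => ?_⟩
      have h2 := (hb i).trans h
      rwa [div_le_iff₀ (hv i)] at h2
  rw [MM, hset, csInf_Ici]

lemma MM_zero {n : ℕ} : MM (0 : Fin n → ℝ) 0 = 0 := by
  have : {C : ℝ | 0 < C ∧ ∀ i, (0 : Fin n → ℝ) i ≤ C * (0 : Fin n → ℝ) i} = Set.Ioi 0 := by
    ext C; simp
  rw [MM, this, csInf_Ioi]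

lemma comp_of_pos {n : ℕ} [Nonempty (Fin n)] {x y : Fin n → ℝ}
    (hx : ∀ i, 0 < x i) (hy : ∀ i, 0 < y i) : Comp x y := by
  obtain ⟨imax, hmax⟩ := Finite.exists_max (fun i => x i / y i)
  obtain ⟨imin, hmin⟩ := Finite.exists_min (fun i => x i / y i)
  refine ⟨x imin / y imin, x imax / y imax,
    div_pos (hx imin) (hy imin), div_pos (hx imax) (hy imax), fun i => ?_, fun i => ?_⟩
  · have := hmin i
    rw [div_le_div_iff₀ (hy imin) (hy i)] at this
    rw [div_mul_eq_mul_div, div_le_iff₀ (hy imin)]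
    linarith
  · have := hmax i
    rw [div_le_div_iff₀ (hy i) (hy imax)] at this
    rw [div_mul_eq_mul_div, le_div_iff₀ (hy imax)]
    linarith

lemma main_lemma {m n : ℕ} (hm : 0 < m) (hn : 0 < n)
    (A : Matrix (Fin m) (Fin n) ℝ) (hA : ∀ i j, 0 < A i j) :
    BddAbove (diamSet A) ∧
    sSup (diamSet A)
      = Real.log (⨆ q : (Fin m × Fin m) × (Fin n × Fin n),
          (A q.1.1 q.2.1 * A q.1.2 q.2.2) / (A q.1.1 q.2.2 * A q.1.2 q.2.1)) := by
  haveI : Nonempty (Fin m) := ⟨⟨0, hm⟩⟩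
  haveI : Nonempty (Fin n) := ⟨⟨0, hn⟩⟩
  set f : (Fin m × Fin m) × (Fin n × Fin n) → ℝ :=
    fun q => (A q.1.1 q.2.1 * A q.1.2 q.2.2) / (A q.1.1 q.2.2 * A q.1.2 q.2.1) with hf
  set R : ℝ := ⨆ q, f q with hRdef
  have hfR : ∀ q, f q ≤ R := fun q => le_ciSup (Finite.bddAbove_range f) q
  have hR1 : 1 ≤ R := by
    obtain ⟨k⟩ := (inferInstance : Nonempty (Fin m))
    obtain ⟨i⟩ := (inferInstance : Nonempty (Fin n))
    have := hfR ((k, k), (i, i))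
    simp only [hf] at this
    rwa [div_self (ne_of_gt (mul_pos (hA k i) (hA k i)))] at this
  have hRpos : 0 < R := lt_of_lt_of_le one_pos hR1
  -- entrywise ratio bound
  have hratio : ∀ (k l : Fin m) (i j : Fin n),
      A k i * A l j ≤ R * (A k j * A l i) := by
    intro k l i j
    have h := hfR ((k, l), (i, j))
    simp only [hf] at h
    rwa [div_le_iff₀ (mul_pos (hA k j) (hA l i))] at h
  -- key inequality
  have hkey : ∀ (x y : Fin n → ℝ), (∀ i, 0 ≤ x i) → (∀ i, 0 ≤ y i) → ∀ (k l : Fin m),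
      A.mulVec x k * A.mulVec y l ≤ R * (A.mulVec y k * A.mulVec x l) := by
    intro x y hx hy k l
    simp only [Matrix.mulVec, dotProduct]
    rw [Finset.sum_mul_sum, Finset.sum_mul_sum]
    rw [show ∑ i, ∑ j, (A k i * y i) * (A l j * x j)
        = ∑ i, ∑ j, (A k j * y j) * (A l i * x i) from Finset.sum_comm]
    rw [Finset.mul_sum]
    refine Finset.sum_le_sum fun i _ => ?_
    rw [Finset.mul_sum]
    refine Finset.sum_le_sum fun j _ => ?_
    calc (A k i * x i) * (A l j * y j) = (A k i * A l j) * (x i * y j) := by ring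
      _ ≤ (R * (A k j * A l i)) * (x i * y j) :=
          mul_le_mul_of_nonneg_right (hratio k l i j) (mul_nonneg (hx i) (hy j))
      _ = R * ((A k j * y j) * (A l i * x i)) := by ring
  -- upper bound
  have hub : ∀ r ∈ diamSet A, r ≤ Real.log R := by
    rintro r ⟨x, y, hx, hy, ⟨c, C, hc, hC, h1, h2⟩, rfl⟩
    by_cases hx0 : ∀ i, x i = 0
    · have hy0 : ∀ i, y i = 0 := by
        intro i
        have := h1 i; rw [hx0 i] at this
        nlinarith [hy i]
      have hxz : A.mulVec x = 0 := by
        funext k; simp [Matrix.mulVec, dotProduct, hx0]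
      have hyz : A.mulVec y = 0 := by
        funext k; simp [Matrix.mulVec, dotProduct, hy0]
      rw [hxz, hyz, dH, MM_zero, mul_zero, Real.log_zero]
      exact Real.log_nonneg hR1
    · push_neg at hx0
      obtain ⟨i₀, hi₀⟩ := hx0
      have hxi₀ : 0 < x i₀ := lt_of_le_of_ne (hx i₀) (Ne.symm hi₀)
      have hyi₀ : 0 < y i₀ := by nlinarith [h2 i₀]
      have hu : ∀ k, 0 < A.mulVec x k := fun k =>
        Finset.sum_pos' (fun i _ => mul_nonneg (hA k i).le (hx i))
          ⟨i₀, Finset.mem_univ _, mul_pos (hA k i₀) hxi₀⟩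
      have hv : ∀ k, 0 < A.mulVec y k := fun k =>
        Finset.sum_pos' (fun i _ => mul_nonneg (hA k i).le (hy i))
          ⟨i₀, Finset.mem_univ _, mul_pos (hA k i₀) hyi₀⟩
      rw [dH, MM_eq hu hv, MM_eq hv hu]
      obtain ⟨k₀, hk₀, -⟩ := exists_ciSup_eq (fun k => A.mulVec x k / A.mulVec y k)
      obtain ⟨l₀, hl₀, -⟩ := exists_ciSup_eq (fun l => A.mulVec y l / A.mulVec x l)
      rw [hk₀, hl₀]
      have hle : A.mulVec x k₀ / A.mulVec y k₀ * (A.mulVec y l₀ / A.mulVec x l₀) ≤ R := by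
        rw [div_mul_div_comm, div_le_iff₀ (mul_pos (hv k₀) (hu l₀))]
        calc A.mulVec x k₀ * A.mulVec y l₀ ≤ R * (A.mulVec y k₀ * A.mulVec x l₀) :=
              hkey x y hx hy k₀ l₀
          _ = R * (A.mulVec y k₀ * A.mulVec x l₀) := rfl
      exact Real.log_le_log
        (mul_pos (div_pos (hu k₀) (hv k₀)) (div_pos (hv l₀) (hu l₀))) hle
  have hBdd : BddAbove (diamSet A) := ⟨Real.log R, hub⟩
  refine ⟨hBdd, ?_⟩
  have hne : (diamSet A).Nonempty := by
    refine ⟨dH (A.mulVec fun _ => 1) (A.mulVec fun _ => 1),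
      (fun _ => 1), (fun _ => 1), fun _ => zero_le_one, fun _ => zero_le_one,
      ⟨1, 1, one_pos, one_pos, fun i => le_of_eq (one_mul _), fun i => le_of_eq (one_mul _).symm⟩,
      rfl⟩
  refine le_antisymm (csSup_le hne hub) ?_
  -- lower bound via limiting argument
  obtain ⟨⟨⟨k₀, l₀⟩, ⟨i₀, j₀⟩⟩, hq₀, -⟩ := exists_ciSup_eq f
  set s : Fin m → ℝ := fun k => ∑ i, A k i with hs
  have hspos : ∀ k, 0 < s k := fun k =>
    Finset.sum_pos (fun i _ => hA k i) ⟨Classical.arbitrary _, Finset.mem_univ _⟩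
  have hmul : ∀ (i' : Fin n) (ε : ℝ) (k : Fin m),
      A.mulVec (fun i => (if i = i' then 1 else 0) + ε) k = A k i' + ε * s k := by
    intro i' ε k
    simp only [Matrix.mulVec, dotProduct, mul_add, Finset.sum_add_distrib, mul_ite, mul_one,
      mul_zero, Finset.sum_ite_eq', Finset.mem_univ, if_true]
    rw [← Finset.sum_mul, hs, mul_comm]
  set g : ℝ → ℝ := fun ε =>
    ((A k₀ i₀ + ε * s k₀) * (A l₀ j₀ + ε * s l₀)) /
      ((A k₀ j₀ + ε * s k₀) * (A l₀ i₀ + ε * s l₀)) with hg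
  have hdenpos : 0 < A k₀ j₀ * A l₀ i₀ := mul_pos (hA k₀ j₀) (hA l₀ i₀)
  have htends : Filter.Tendsto (fun ε => Real.log (g ε)) (nhdsWithin 0 (Set.Ioi 0))
      (nhds (Real.log R)) := by
    have hcont : Filter.Tendsto g (nhds 0) (nhds R) := by
      have h1 : Filter.Tendsto (fun ε : ℝ => (A k₀ i₀ + ε * s k₀) * (A l₀ j₀ + ε * s l₀))
          (nhds 0) (nhds (A k₀ i₀ * A l₀ j₀)) := by
        have : Continuous (fun ε : ℝ => (A k₀ i₀ + ε * s k₀) * (A l₀ j₀ + ε * s l₀)) :=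
          (continuous_const.add (continuous_id'.mul continuous_const)).mul
            (continuous_const.add (continuous_id'.mul continuous_const))
        simpa using this.tendsto 0
      have h2 : Filter.Tendsto (fun ε : ℝ => (A k₀ j₀ + ε * s k₀) * (A l₀ i₀ + ε * s l₀))
          (nhds 0) (nhds (A k₀ j₀ * A l₀ i₀)) := by
        have : Continuous (fun ε : ℝ => (A k₀ j₀ + ε * s k₀) * (A l₀ i₀ + ε * s l₀)) :=
          (continuous_const.add (continuous_id'.mul continuous_const)).mul
            (continuous_const.add (continuous_id'.mul continuous_const))
        simpa using this.tendsto 0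
      have := h1.div h2 (ne_of_gt hdenpos)
      rwa [show A k₀ i₀ * A l₀ j₀ / (A k₀ j₀ * A l₀ i₀) = R from hq₀.symm] at this
    exact (hcont.mono_left nhdsWithin_le_nhds).log (ne_of_gt hRpos)
  have hev : ∀ᶠ ε in nhdsWithin 0 (Set.Ioi 0), Real.log (g ε) ≤ sSup (diamSet A) := by
    filter_upwards [self_mem_nhdsWithin] with ε hε
    have hεpos : 0 < ε := hε
    set x : Fin n → ℝ := fun i => (if i = i₀ then 1 else 0) + ε with hxdef
    set y : Fin n → ℝ := fun i => (if i = j₀ then 1 else 0) + ε with hydef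
    have hxpos : ∀ i, 0 < x i := by
      intro i; rw [hxdef]; dsimp; split <;> linarith
    have hypos : ∀ i, 0 < y i := by
      intro i; rw [hydef]; dsimp; split <;> linarith
    have hu : ∀ k, 0 < A.mulVec x k := fun k =>
      Finset.sum_pos (fun i _ => mul_pos (hA k i) (hxpos i)) ⟨i₀, Finset.mem_univ _⟩
    have hv : ∀ k, 0 < A.mulVec y k := fun k =>
      Finset.sum_pos (fun i _ => mul_pos (hA k i) (hypos i)) ⟨i₀, Finset.mem_univ _⟩
    have hmem : dH (A.mulVec x) (A.mulVec y) ∈ diamSet A :=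
      ⟨x, y, fun i => (hxpos i).le, fun i => (hypos i).le, comp_of_pos hxpos hypos, rfl⟩
    refine le_trans ?_ (le_csSup hBdd hmem)
    rw [dH, MM_eq hu hv, MM_eq hv hu]
    have hgε : g ε = (A.mulVec x k₀ / A.mulVec y k₀) * (A.mulVec y l₀ / A.mulVec x l₀) := by
      rw [hg]; dsimp only
      rw [hmul i₀ ε k₀, hmul i₀ ε l₀, hmul j₀ ε k₀, hmul j₀ ε l₀, div_mul_div_comm]
    rw [hgε]
    have hb1 : A.mulVec x k₀ / A.mulVec y k₀ ≤ ⨆ k, A.mulVec x k / A.mulVec y k :=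
      le_ciSup (Finite.bddAbove_range (fun k => A.mulVec x k / A.mulVec y k)) k₀
    have hb2 : A.mulVec y l₀ / A.mulVec x l₀ ≤ ⨆ l, A.mulVec y l / A.mulVec x l :=
      le_ciSup (Finite.bddAbove_range (fun l => A.mulVec y l / A.mulVec x l)) l₀
    apply Real.log_le_log
      (mul_pos (div_pos (hu k₀) (hv k₀)) (div_pos (hv l₀) (hu l₀)))
    exact mul_le_mul hb1 hb2 (div_pos (hv l₀) (hu l₀)).le
      (le_trans (div_pos (hu k₀) (hv k₀)).le hb1)
  exact le_of_tendsto htends hev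

theorem stmt13 {m n : ℕ} (hm : 0 < m) (hn : 0 < n)
    (A : Matrix (Fin m) (Fin n) ℝ) (hA : ∀ i j, 0 < A i j) :
    BddAbove (diamSet A) ∧
    sSup (diamSet A)
      = Real.log (⨆ q : (Fin m × Fin m) × (Fin n × Fin n),
          (A q.1.1 q.2.1 * A q.1.2 q.2.2) / (A q.1.1 q.2.2 * A q.1.2 q.2.1)) ∧
    sSup (diamSet A) = sSup (diamSet Aᵀ) := by
  obtain ⟨h1, h2⟩ := main_lemma hm hn A hA
  obtain ⟨h1', h2'⟩ := main_lemma hn hm Aᵀ (fun i j => hA j i)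
  refine ⟨h1, h2, ?_⟩
  rw [h2, h2']
  congr 1
  have hfun : (fun q : (Fin n × Fin n) × (Fin m × Fin m) =>
      (Aᵀ q.1.1 q.2.1 * Aᵀ q.1.2 q.2.2) / (Aᵀ q.1.1 q.2.2 * Aᵀ q.1.2 q.2.1))
      = (fun q : (Fin m × Fin m) × (Fin n × Fin n) =>
      (A q.1.1 q.2.1 * A q.1.2 q.2.2) / (A q.1.1 q.2.2 * A q.1.2 q.2.1)) ∘
        (Equiv.prodComm ((Fin n) × (Fin n)) ((Fin m) × (Fin m))) := by
    funext q
    simp only [Function.comp_apply, Equiv.prodComm_apply, Prod.fst_swap, Prod.snd_swap,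
      Matrix.transpose_apply]
    ring
  rw [← sSup_range, ← sSup_range, hfun,
    (Equiv.prodComm ((Fin n) × (Fin n)) ((Fin m) × (Fin m))).surjective.range_comp]
end

section
/- Let ε > 0, p, q ∈ (1,∞), and let A_ε = [[ε, 1],[1, ε]] ∈ ℝ^{2×2}. If τ = ((1−ε)/(1+ε))^2 · (p−1)/(q−1) > 1, then the function f(x) = ‖A_ε x‖_p / ‖x‖_q has at least three distinct positive critical points on the segment {(t, 1−t) : t ∈ (0,1)}; equivalently, the function ψ(t) = t^{q−1}[(tε + 1 − t)^{p−1} + ε(ε + t − tε)^{p−1}] satisfies ψ(t) = ψ(1−t) for at least three distinct values t ∈ (0,1). -/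
/-!
The function `g t = ψ t - ψ (1 - t)` vanishes at `1/2`, and `g'(1/2) = 2 ψ'(1/2)` is a positive
multiple of `(q - 1)(1 + ε)² - (p - 1)(1 - ε)²`, which `τ > 1` makes negative. Since
`g 1 = ψ 1 - ψ 0 = ε ^ (p - 1) + ε > 0`, the intermediate value theorem gives a zero `t` of `g`
in `(1/2, 1)`; then `1 - t` and `1/2` are zeros too.
-/

open Set Topology

lemma exists_mem_Ioo_neg_of_hasDerivAt_neg {g : ℝ → ℝ} {g' a b : ℝ} (hd : HasDerivAt g g' a)
    (hg' : g' < 0) (ha : g a = 0) (hab : a < b) : ∃ s ∈ Ioo a b, g s < 0 := by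
  have hslope : ∀ᶠ s in 𝓝[>] a, slope g a s < 0 :=
    hd.hasDerivWithinAt.limsup_slope_le' (lt_irrefl a) hg'
  obtain ⟨s, hs, hsab⟩ := (hslope.and (Ioo_mem_nhdsGT hab)).exists
  rw [slope_def_field, ha, sub_zero, div_neg_iff] at hs
  exact ⟨s, hsab, by rcases hs with ⟨-, h⟩ | ⟨h, -⟩ <;> linarith [hsab.1]⟩

lemma exists_mem_Ioo_eq_zero_of_hasDerivAt_neg {g : ℝ → ℝ} {g' a b : ℝ}
    (hg : ContinuousOn g (Icc a b)) (hd : HasDerivAt g g' a) (hg' : g' < 0) (ha : g a = 0)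
    (hb : 0 < g b) (hab : a < b) : ∃ t ∈ Ioo a b, g t = 0 := by
  obtain ⟨s, hs, hgs⟩ := exists_mem_Ioo_neg_of_hasDerivAt_neg hd hg' ha hab
  obtain ⟨t, ht, hgt⟩ := intermediate_value_Ioo hs.2.le (hg.mono (Icc_subset_Icc_left hs.1.le))
    ⟨hgs, hb⟩
  exact ⟨t, ⟨hs.1.trans ht.1, ht.2⟩, hgt⟩

lemma exists_mem_Ioo_eq_comp_one_sub {ψ : ℝ → ℝ} {D : ℝ} (hψ : Continuous ψ)
    (hd : HasDerivAt ψ D (1 / 2)) (hD : D < 0) (h01 : ψ 0 < ψ 1) :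
    ∃ t ∈ Ioo (1 / 2 : ℝ) 1, ψ t = ψ (1 - t) := by
  have hd' : HasDerivAt (fun t => ψ (1 - t)) (-D) (1 / 2) :=
    HasDerivAt.comp_const_sub 1 (1 / 2) (by norm_num; exact hd)
  obtain ⟨t, ht, hgt⟩ := exists_mem_Ioo_eq_zero_of_hasDerivAt_neg (g := fun t => ψ t - ψ (1 - t))
    (by fun_prop) (hd.sub hd') (by linarith) (by norm_num) (by norm_num; linarith) one_half_lt_one
  exact ⟨t, ht, sub_eq_zero.mp hgt⟩

noncomputable def psi (ε p q t : ℝ) : ℝ :=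
  t ^ (q - 1) * ((t * ε + 1 - t) ^ (p - 1) + ε * (ε + t - t * ε) ^ (p - 1))

section psi

variable {ε p q : ℝ}

lemma continuous_psi (hp : 1 ≤ p) (hq : 1 ≤ q) : Continuous (psi ε p q) := by
  unfold psi
  have hp' : 0 ≤ p - 1 := by linarith
  have hq' : 0 ≤ q - 1 := by linarith
  exact (continuous_id.rpow_const fun _ => Or.inr hq').mul
    (((by fun_prop : Continuous fun t : ℝ => t * ε + 1 - t).rpow_const fun _ => Or.inr hp').add
      (continuous_const.mul
        ((by fun_prop : Continuous fun t : ℝ => ε + t - t * ε).rpow_const fun _ => Or.inr hp')))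

lemma psi_zero_lt_psi_one (hε : 0 < ε) (hq : q ≠ 1) : psi ε p q 0 < psi ε p q 1 := by
  have : q - 1 ≠ 0 := sub_ne_zero.mpr hq
  simp only [psi, Real.zero_rpow this, zero_mul, Real.one_rpow, one_mul]
  ring_nf
  positivity

lemma hasDerivAt_psi {t : ℝ} (ht : t ≠ 0) (hA : t * ε + 1 - t ≠ 0) (hB : ε + t - t * ε ≠ 0) :
    HasDerivAt (psi ε p q)
      ((q - 1) * t ^ (q - 2) * ((t * ε + 1 - t) ^ (p - 1) + ε * (ε + t - t * ε) ^ (p - 1)) +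
        t ^ (q - 1) * ((p - 1) * (1 - ε) *
          (ε * (ε + t - t * ε) ^ (p - 2) - (t * ε + 1 - t) ^ (p - 2)))) t := by
  have hA' : HasDerivAt (fun t => t * ε + 1 - t) (ε - 1) t :=
    ((((hasDerivAt_id' t).mul_const ε).add_const 1).sub (hasDerivAt_id' t)).congr_deriv (by ring)
  have hB' : HasDerivAt (fun t => ε + t - t * ε) (1 - ε) t :=
    (((hasDerivAt_id' t).const_add ε).sub ((hasDerivAt_id' t).mul_const ε)).congr_deriv (by ring)
  refine ((Real.hasDerivAt_rpow_const (p := q - 1) (Or.inl ht)).mul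
    ((hA'.rpow_const (p := p - 1) (Or.inl hA)).add
      ((hB'.rpow_const (p := p - 1) (Or.inl hB)).const_mul ε))).congr_deriv ?_
  simp only [Pi.add_apply]
  rw [show q - 1 - 1 = q - 2 by ring, show p - 1 - 1 = p - 2 by ring]
  ring

lemma hasDerivAt_psi_half (hε : 0 < 1 + ε) :
    HasDerivAt (psi ε p q) ((1 / 2) ^ (q - 2) * ((1 + ε) / 2) ^ (p - 2) *
      (((q - 1) * (1 + ε) ^ 2 - (p - 1) * (1 - ε) ^ 2) / 2)) (1 / 2) := by
  have hc : (1 / 2 : ℝ) * ε + 1 - 1 / 2 = (1 + ε) / 2 := by ring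
  have hc' : ε + 1 / 2 - (1 / 2 : ℝ) * ε = (1 + ε) / 2 := by ring
  have hpos : (0 : ℝ) < (1 + ε) / 2 := by positivity
  refine (hasDerivAt_psi (p := p) (q := q) one_half_pos.ne' (hc ▸ hpos.ne')
    (hc' ▸ hpos.ne')).congr_deriv ?_
  rw [hc, hc', show q - 1 = q - 2 + 1 by ring, show p - 1 = p - 2 + 1 by ring,
    Real.rpow_add one_half_pos, Real.rpow_add hpos, Real.rpow_one, Real.rpow_one]
  ring

end psi

theorem stmt15 (ε p q : ℝ) (hε : 0 < ε) (hp : 1 < p) (hq : 1 < q)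
    (τ : ℝ) (hτdef : τ = ((1 - ε) / (1 + ε)) ^ 2 * ((p - 1) / (q - 1)))
    (hτ : 1 < τ)
    (ψ : ℝ → ℝ)
    (hψ : ψ = fun t => t ^ (q - 1) *
      ((t * ε + 1 - t) ^ (p - 1) + ε * (ε + t - t * ε) ^ (p - 1))) :
    ∃ t₁ t₂ t₃ : ℝ, t₁ ∈ Set.Ioo (0:ℝ) 1 ∧ t₂ ∈ Set.Ioo (0:ℝ) 1 ∧
      t₃ ∈ Set.Ioo (0:ℝ) 1 ∧ t₁ ≠ t₂ ∧ t₁ ≠ t₃ ∧ t₂ ≠ t₃ ∧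
      ψ t₁ = ψ (1 - t₁) ∧ ψ t₂ = ψ (1 - t₂) ∧ ψ t₃ = ψ (1 - t₃) := by
  obtain rfl : ψ = psi ε p q := hψ
  have hτ' : (1 + ε) ^ 2 * (q - 1) < (1 - ε) ^ 2 * (p - 1) := by
    rwa [hτdef, div_pow, div_mul_div_comm, one_lt_div (by nlinarith)] at hτ
  have hD : (1 / 2 : ℝ) ^ (q - 2) * ((1 + ε) / 2) ^ (p - 2) *
      (((q - 1) * (1 + ε) ^ 2 - (p - 1) * (1 - ε) ^ 2) / 2) < 0 :=
    mul_neg_of_pos_of_neg (by positivity) (by linarith)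
  obtain ⟨t, ⟨ht₀, ht₁⟩, hψt⟩ := exists_mem_Ioo_eq_comp_one_sub (continuous_psi hp.le hq.le)
    (hasDerivAt_psi_half (by linarith)) hD (psi_zero_lt_psi_one hε hq.ne')
  refine ⟨1 - t, 1 / 2, t, ⟨by linarith, by linarith⟩, ⟨by norm_num, by norm_num⟩,
    ⟨by linarith, ht₁⟩, by linarith, by linarith, by linarith, by rw [sub_sub_cancel, hψt], by norm_num, hψt⟩
end

section
/- Let ε > 0, p, q ∈ (1,∞), A_ε = [[ε,1],[1,ε]], and define ψ(t) = t^{q−1}[(tε+1−t)^{p−1} + ε(ε+t−tε)^{p−1}] and h(t) = ψ(1−t) − ψ(t) on [0,1]. Then h'(1/2) > 0 if and only if (q−1)(1+ε)^2 < (p−1)(1−ε)^2. -/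
theorem stmt16 (ε p q : ℝ) (hε : 0 < ε) (hp : 1 < p) (hq : 1 < q)
    (ψ : ℝ → ℝ)
    (hψ : ψ = fun t => t ^ (q - 1) *
      ((t * ε + 1 - t) ^ (p - 1) + ε * (ε + t - t * ε) ^ (p - 1)))
    (h : ℝ → ℝ) (hh : h = fun t => ψ (1 - t) - ψ t) :
    0 < deriv h (1 / 2) ↔ (q - 1) * (1 + ε) ^ 2 < (p - 1) * (1 - ε) ^ 2 := by
  have hc : (0:ℝ) < (1 + ε) / 2 := by linarith
  have x := (1:ℝ)/2
  have hAval : ((1:ℝ)/2) * ε + 1 - 1/2 = (1 + ε) / 2 := by ring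
  have hBval : ε + (1:ℝ)/2 - (1/2) * ε = (1 + ε) / 2 := by ring
  have hA : HasDerivAt (fun t : ℝ => t * ε + 1 - t) (1 * ε - 1) (1/2) :=
    (((hasDerivAt_id (1/2:ℝ)).mul_const ε).add_const 1).sub (hasDerivAt_id _)
  have hB : HasDerivAt (fun t : ℝ => ε + t - t * ε) (1 - 1 * ε) (1/2) :=
    ((hasDerivAt_id (1/2:ℝ)).const_add ε).sub ((hasDerivAt_id _).mul_const ε)
  have hA' : HasDerivAt (fun t : ℝ => (t * ε + 1 - t) ^ (p - 1))
      ((1 * ε - 1) * (p - 1) * (((1:ℝ)/2) * ε + 1 - 1/2) ^ (p - 1 - 1)) (1/2) :=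
    hA.rpow_const (Or.inl (by rw [hAval]; positivity))
  have hB' : HasDerivAt (fun t : ℝ => ε * (ε + t - t * ε) ^ (p - 1))
      (ε * ((1 - 1 * ε) * (p - 1) * (ε + (1:ℝ)/2 - (1/2) * ε) ^ (p - 1 - 1))) (1/2) :=
    (hB.rpow_const (Or.inl (by rw [hBval]; positivity))).const_mul ε
  have ht : HasDerivAt (fun t : ℝ => t ^ (q - 1))
      (1 * (q - 1) * ((1:ℝ)/2) ^ (q - 1 - 1)) (1/2) :=
    (hasDerivAt_id (1/2:ℝ)).rpow_const (Or.inl (by norm_num))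
  have hψd : HasDerivAt ψ
      (1 * (q - 1) * ((1:ℝ)/2) ^ (q - 1 - 1) *
        ((((1:ℝ)/2) * ε + 1 - 1/2) ^ (p - 1) + ε * (ε + (1:ℝ)/2 - (1/2) * ε) ^ (p - 1)) +
       ((1:ℝ)/2) ^ (q - 1) *
        ((1 * ε - 1) * (p - 1) * (((1:ℝ)/2) * ε + 1 - 1/2) ^ (p - 1 - 1) +
         ε * ((1 - 1 * ε) * (p - 1) * (ε + (1:ℝ)/2 - (1/2) * ε) ^ (p - 1 - 1)))) (1/2) := by
    rw [hψ]; exact ht.mul (hA'.add hB')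
  set D := (1 * (q - 1) * ((1:ℝ)/2) ^ (q - 1 - 1) *
        ((((1:ℝ)/2) * ε + 1 - 1/2) ^ (p - 1) + ε * (ε + (1:ℝ)/2 - (1/2) * ε) ^ (p - 1)) +
       ((1:ℝ)/2) ^ (q - 1) *
        ((1 * ε - 1) * (p - 1) * (((1:ℝ)/2) * ε + 1 - 1/2) ^ (p - 1 - 1) +
         ε * ((1 - 1 * ε) * (p - 1) * (ε + (1:ℝ)/2 - (1/2) * ε) ^ (p - 1 - 1)))) with hD
  have hinner : HasDerivAt (fun t : ℝ => 1 - t) (-1) (1/2) :=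
    (hasDerivAt_id (1/2:ℝ)).const_sub 1
  have hψd2 : HasDerivAt ψ D (1 - 1/2) := by norm_num at hψd ⊢; exact hψd
  have hcomp : HasDerivAt (fun t : ℝ => ψ (1 - t)) (D * (-1)) (1/2) :=
    HasDerivAt.comp _ hψd2 hinner
  have hhd : HasDerivAt h (D * (-1) - D) (1/2) := by
    rw [hh]; exact hcomp.sub hψd
  rw [hhd.deriv]
  -- simplify
  have hu : (0:ℝ) < ((1:ℝ)/2) ^ (q - 1 - 1) := Real.rpow_pos_of_pos (by norm_num) _
  have hv : (0:ℝ) < ((1 + ε)/2) ^ (p - 1 - 1) := Real.rpow_pos_of_pos hc _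
  have eq1 : ((1:ℝ)/2) ^ (q - 1) = ((1:ℝ)/2) ^ (q - 1 - 1) * (1/2) := by
    rw [← Real.rpow_add_one (by norm_num : ((1:ℝ)/2) ≠ 0) (q - 1 - 1),
      show q - 1 - 1 + 1 = q - 1 by ring]
  have eq2 : ((1 + ε)/2) ^ (p - 1) = ((1 + ε)/2) ^ (p - 1 - 1) * ((1 + ε)/2) := by
    rw [← Real.rpow_add_one (ne_of_gt hc) (p - 1 - 1), show p - 1 - 1 + 1 = p - 1 by ring]
  have hDval : D * (-1) - D = (((1:ℝ)/2) ^ (q - 1 - 1) * ((1 + ε)/2) ^ (p - 1 - 1)) *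
      ((p - 1) * (1 - ε) ^ 2 - (q - 1) * (1 + ε) ^ 2) := by
    rw [hD, hAval, hBval, eq1, eq2]; ring
  rw [hDval, mul_pos_iff_of_pos_left (mul_pos hu hv), sub_pos]
end
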